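/- arXiv:2011.06208 — 6 statements merged into one kernel-verified Lean document; each statement's English description precedes it below -/
import Mathlib

section
/- The privacy funnel function PF(r) = inf{I(Y;T) : Y → X → T, I(X;T) ≥ r} is convex and nondecreasing in r on [0, H(X)]. -/
open Real BigOperators

namespace BN

variable {α β γ : Type*}

section Finite
variable [Fintype α] [Fintype β] [Fintype γ]

/-- `q` is a probability mass function on a finite alphabet. -/
def IsPMF (q : α → ℝ) : Prop := (∀ a, 0 ≤ q a) ∧ (∑ a, q a) = 1

/-- `p` is a joint probability mass function. -/
def IsJointPMF (p : α → β → ℝ) : Prop :=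
  (∀ a b, 0 ≤ p a b) ∧ (∑ a, ∑ b, p a b) = 1

/-- `k` is a channel (conditional distribution) from `α` to `γ`. -/
def IsChannel (k : α → γ → ℝ) : Prop :=
  (∀ a c, 0 ≤ k a c) ∧ ∀ a, (∑ c, k a c) = 1

/-- first marginal of a joint pmf -/
def fstM (p : α → β → ℝ) (a : α) : ℝ := ∑ b, p a b

/-- second marginal of a joint pmf -/
def sndM (p : α → β → ℝ) (b : β) : ℝ := ∑ a, p a b

/-- Shannon mutual information (in nats) of a joint pmf. -/
noncomputable def mi (p : α → β → ℝ) : ℝ :=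
  ∑ a, ∑ b, p a b * Real.log (p a b / (fstM p a * sndM p b))

/-- Shannon entropy (in nats). -/
noncomputable def ent (q : α → ℝ) : ℝ := -∑ a, q a * Real.log (q a)

/-- conditional entropy H(X|Y) of the first coordinate given the second. -/
noncomputable def condEnt (p : α → β → ℝ) : ℝ :=
  -∑ a, ∑ b, p a b * Real.log (p a b / sndM p b)

/-- Joint pmf of (X,T) when T is generated from X via channel `k`,
so Y ⊸ X ⊸ T is a Markov chain. -/
noncomputable def jXT (p : α → β → ℝ) (k : α → γ → ℝ) : α → γ → ℝ :=
  fun a c => fstM p a * k a c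

/-- Joint pmf of (Y,T) under the Markov chain Y ⊸ X ⊸ T. -/
noncomputable def jYT (p : α → β → ℝ) (k : α → γ → ℝ) : β → γ → ℝ :=
  fun b c => ∑ a, p a b * k a c

/-- I(X;T) under the Markov chain Y ⊸ X ⊸ T. -/
noncomputable def miXT (p : α → β → ℝ) (k : α → γ → ℝ) : ℝ := mi (jXT p k)

/-- I(Y;T) under the Markov chain Y ⊸ X ⊸ T. -/
noncomputable def miYT (p : α → β → ℝ) (k : α → γ → ℝ) : ℝ := mi (jYT p k)

/-- The information bottleneck function. -/
noncomputable def IB (p : α → β → ℝ) (R : ℝ) : ℝ :=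
  sSup {v | ∃ (n : ℕ) (k : α → Fin n → ℝ),
    IsChannel k ∧ miXT p k ≤ R ∧ v = miYT p k}

/-- The privacy funnel function. -/
noncomputable def PF (p : α → β → ℝ) (r : ℝ) : ℝ :=
  sInf {v | ∃ (n : ℕ) (k : α → Fin n → ℝ),
    IsChannel k ∧ r ≤ miXT p k ∧ v = miYT p k}

end Finite

end BN

namespace BN

section Aux
set_option linter.unusedSectionVars false
set_option linter.deprecated false
variable {α β γ γ' γ₁ γ₂ : Type*} [Fintype α] [Fintype β] [Fintype γ]
  [Fintype γ'] [Fintype γ₁] [Fintype γ₂]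

/-- Nonnegativity of mutual information. -/
lemma mi_nonneg (j : α → β → ℝ) (h0 : ∀ a b, 0 ≤ j a b)
    (h1 : ∑ a, ∑ b, j a b = 1) : 0 ≤ mi j := by
  have hf : ∀ a, 0 ≤ fstM j a := fun a =>
    Finset.sum_nonneg fun b _ => h0 a b
  have hs : ∀ b, 0 ≤ sndM j b := fun b =>
    Finset.sum_nonneg fun a _ => h0 a b
  have hq : ∑ a, ∑ b, fstM j a * sndM j b = 1 := by
    have h2 : ∑ b, sndM j b = 1 := by
      unfold sndM; rw [Finset.sum_comm]; exact h1
    have h3 : ∑ a, fstM j a = 1 := h1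
    calc ∑ a, ∑ b, fstM j a * sndM j b
        = ∑ a, fstM j a * ∑ b, sndM j b := by
          simp [Finset.mul_sum]
      _ = 1 := by rw [h2]; simpa using h3
  have key : ∀ a b, j a b - fstM j a * sndM j b
      ≤ j a b * Real.log (j a b / (fstM j a * sndM j b)) := by
    intro a b
    rcases eq_or_lt_of_le (h0 a b) with h | h
    · rw [← h]
      simp [mul_nonneg (hf a) (hs b)]
    · have hfa : 0 < fstM j a :=
        lt_of_lt_of_le h (Finset.single_le_sum (fun b _ => h0 a b) (Finset.mem_univ b))
      have hsb : 0 < sndM j b :=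
        lt_of_lt_of_le h (Finset.single_le_sum (fun a _ => h0 a b) (Finset.mem_univ a))
      have hqpos : 0 < fstM j a * sndM j b := mul_pos hfa hsb
      have hlog := Real.log_le_sub_one_of_pos (div_pos hqpos h)
      have hmul := mul_le_mul_of_nonneg_left hlog h.le
      have heq : j a b * (fstM j a * sndM j b / j a b - 1)
          = fstM j a * sndM j b - j a b := by field_simp
      rw [heq] at hmul
      have hlg : Real.log (fstM j a * sndM j b / j a b)
          = - Real.log (j a b / (fstM j a * sndM j b)) := by
        rw [Real.log_div (ne_of_gt hqpos) (ne_of_gt h),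
          Real.log_div (ne_of_gt h) (ne_of_gt hqpos)]; ring
      rw [hlg] at hmul
      nlinarith
  calc (0:ℝ) = ∑ a, ∑ b, (j a b - fstM j a * sndM j b) := by
        simp [Finset.sum_sub_distrib, h1, hq]
    _ ≤ mi j := by
        unfold mi
        exact Finset.sum_le_sum fun a _ => Finset.sum_le_sum fun b _ => key a b

/-- mi is invariant under relabeling of the second coordinate. -/
lemma mi_relabel (e : γ ≃ γ') (j : α → γ → ℝ) :
    mi (fun a c => j a (e.symm c)) = mi j := by
  have hfst : ∀ a, fstM (fun a c => j a (e.symm c)) a = fstM j a := by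
    intro a
    exact Fintype.sum_equiv e.symm _ _ (fun c => rfl)
  unfold mi
  refine Finset.sum_congr rfl (fun a _ => ?_)
  refine Fintype.sum_equiv e.symm _ _ (fun c' => ?_)
  rw [hfst]
  rfl

/-- mixture joint pmf on a sum alphabet -/
noncomputable def jmix (t : ℝ) (j₁ : α → γ₁ → ℝ) (j₂ : α → γ₂ → ℝ) :
    α → γ₁ ⊕ γ₂ → ℝ :=
  fun a => Sum.elim (fun c => t * j₁ a c) (fun c => (1 - t) * j₂ a c)

lemma fstM_jmix (t : ℝ) (j₁ : α → γ₁ → ℝ) (j₂ : α → γ₂ → ℝ) (a : α) :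
    fstM (jmix t j₁ j₂) a = t * fstM j₁ a + (1 - t) * fstM j₂ a := by
  simp [jmix, fstM, Fintype.sum_sum_type, Finset.mul_sum]

lemma sndM_jmix_inl (t : ℝ) (j₁ : α → γ₁ → ℝ) (j₂ : α → γ₂ → ℝ) (c : γ₁) :
    sndM (jmix t j₁ j₂) (Sum.inl c) = t * sndM j₁ c := by
  simp [jmix, sndM, Finset.mul_sum]

lemma sndM_jmix_inr (t : ℝ) (j₁ : α → γ₁ → ℝ) (j₂ : α → γ₂ → ℝ) (c : γ₂) :
    sndM (jmix t j₁ j₂) (Sum.inr c) = (1 - t) * sndM j₂ c := by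
  simp [jmix, sndM, Finset.mul_sum]

lemma mix_term (t x f s : ℝ) :
    t * x * Real.log (t * x / (f * (t * s))) = t * (x * Real.log (x / (f * s))) := by
  rcases eq_or_ne t 0 with h | h
  · simp [h]
  · have : t * x / (f * (t * s)) = x / (f * s) := by
      rw [show f * (t * s) = t * (f * s) by ring, mul_div_mul_left _ _ h]
    rw [this]; ring

lemma mi_jmix (t : ℝ) (j₁ : α → γ₁ → ℝ) (j₂ : α → γ₂ → ℝ)
    (hf : ∀ a, fstM j₂ a = fstM j₁ a) :
    mi (jmix t j₁ j₂) = t * mi j₁ + (1 - t) * mi j₂ := by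
  have hfm : ∀ a, fstM (jmix t j₁ j₂) a = fstM j₁ a := by
    intro a; rw [fstM_jmix, hf]; ring
  unfold mi
  rw [show (∑ a, ∑ c, jmix t j₁ j₂ a c *
      Real.log (jmix t j₁ j₂ a c / (fstM (jmix t j₁ j₂) a * sndM (jmix t j₁ j₂) c)))
    = ∑ a, ((∑ c, t * (j₁ a c * Real.log (j₁ a c / (fstM j₁ a * sndM j₁ c))))
        + ∑ c, (1 - t) * (j₂ a c * Real.log (j₂ a c / (fstM j₂ a * sndM j₂ c)))) from ?_]
  · rw [Finset.sum_add_distrib]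
    simp [Finset.mul_sum]
  · refine Finset.sum_congr rfl (fun a _ => ?_)
    rw [Fintype.sum_sum_type]
    congr 1
    · refine Finset.sum_congr rfl (fun c _ => ?_)
      rw [hfm, sndM_jmix_inl]
      exact mix_term t (j₁ a c) (fstM j₁ a) (sndM j₁ c)
    · refine Finset.sum_congr rfl (fun c _ => ?_)
      rw [hfm, sndM_jmix_inr, ← hf]
      exact mix_term (1 - t) (j₂ a c) (fstM j₂ a) (sndM j₂ c)

lemma fstM_jXT (p : α → β → ℝ) (k : α → γ → ℝ) (hk : IsChannel k) (a : α) :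
    fstM (jXT p k) a = fstM p a := by
  simp [fstM, jXT, ← Finset.mul_sum, hk.2 a]

lemma fstM_jYT (p : α → β → ℝ) (k : α → γ → ℝ) (hk : IsChannel k) (b : β) :
    fstM (jYT p k) b = sndM p b := by
  unfold fstM jYT sndM
  rw [Finset.sum_comm]
  refine Finset.sum_congr rfl (fun a _ => ?_)
  rw [← Finset.mul_sum, hk.2 a, mul_one]

/-- the mixed channel on a sum alphabet -/
noncomputable def kmix (t : ℝ) (k₁ : α → γ₁ → ℝ) (k₂ : α → γ₂ → ℝ) :
    α → γ₁ ⊕ γ₂ → ℝ :=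
  fun a => Sum.elim (fun c => t * k₁ a c) (fun c => (1 - t) * k₂ a c)

lemma kmix_channel (t : ℝ) (ht0 : 0 ≤ t) (ht1 : t ≤ 1)
    (k₁ : α → γ₁ → ℝ) (k₂ : α → γ₂ → ℝ) (h₁ : IsChannel k₁) (h₂ : IsChannel k₂) :
    IsChannel (kmix t k₁ k₂) := by
  constructor
  · rintro a (c | c)
    · exact mul_nonneg ht0 (h₁.1 a c)
    · exact mul_nonneg (by linarith) (h₂.1 a c)
  · intro a
    simp [kmix, Fintype.sum_sum_type, ← Finset.mul_sum, h₁.2 a, h₂.2 a]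

lemma jXT_kmix (p : α → β → ℝ) (t : ℝ) (k₁ : α → γ₁ → ℝ) (k₂ : α → γ₂ → ℝ) :
    jXT p (kmix t k₁ k₂) = jmix t (jXT p k₁) (jXT p k₂) := by
  funext a c
  cases c <;> simp [jXT, jmix, kmix] <;> ring

lemma jYT_kmix (p : α → β → ℝ) (t : ℝ) (k₁ : α → γ₁ → ℝ) (k₂ : α → γ₂ → ℝ) :
    jYT p (kmix t k₁ k₂) = jmix t (jYT p k₁) (jYT p k₂) := by
  funext b c
  cases c <;> simp [jYT, jmix, kmix, Finset.mul_sum] <;>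
    exact Finset.sum_congr rfl (fun a _ => by ring)

/-- I(X;T) of the identity channel equals H(X). -/
lemma miXT_ident (p : α → β → ℝ) (_hp : IsJointPMF p) :
    miXT p (fun a c => if Fintype.equivFin α a = c then (1:ℝ) else 0)
      = ent (fstM p) := by
  set e := Fintype.equivFin α
  set k : α → Fin (Fintype.card α) → ℝ := fun a c => if e a = c then (1:ℝ) else 0
  set j := jXT p k with hj
  have hch : IsChannel k := by
    constructor
    · intro a c; dsimp [k]; split <;> norm_num
    · intro a; simp [k]
  have hfst : ∀ a, fstM j a = fstM p a := fstM_jXT p k hch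
  have hsnd : ∀ c, sndM j c = fstM p (e.symm c) := by
    intro c
    unfold j
    unfold sndM jXT
    rw [Finset.sum_eq_single (e.symm c)]
    · simp [k]
    · intro a _ ha
      have : e a ≠ c := fun h => ha (by simp [← h])
      simp [k, this]
    · intro h; exact absurd (Finset.mem_univ _) h
  have hrow : ∀ a, ∑ c, j a c * Real.log (j a c / (fstM j a * sndM j c))
      = -(fstM p a * Real.log (fstM p a)) := by
    intro a
    rw [Finset.sum_eq_single (e a)]
    · rw [hfst, hsnd]
      simp only [Equiv.symm_apply_apply]
      have : j a (e a) = fstM p a := by simp [hj, jXT, k]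
      rw [this]
      rcases eq_or_ne (fstM p a) 0 with h | h
      · simp [h]
      · rw [show fstM p a / (fstM p a * fstM p a) = (fstM p a)⁻¹ by
          field_simp, Real.log_inv]
        ring
    · intro c _ hc
      have : j a c = 0 := by simp [hj, jXT, k, Ne.symm hc]
      simp [this]
    · intro h; exact absurd (Finset.mem_univ _) h
  show mi j = ent (fstM p)
  unfold mi ent
  rw [← Finset.sum_neg_distrib]
  exact Finset.sum_congr rfl (fun a _ => hrow a)

/-- I(Y;T) is nonnegative. -/
lemma miYT_nonneg (p : α → β → ℝ) (hp : IsJointPMF p)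
    (k : α → γ → ℝ) (hk : IsChannel k) : 0 ≤ miYT p k := by
  refine mi_nonneg _ (fun b c => Finset.sum_nonneg fun a _ =>
    mul_nonneg (hp.1 a b) (hk.1 a c)) ?_
  unfold jYT
  calc ∑ b, ∑ c, ∑ a, p a b * k a c
      = ∑ b, ∑ a, ∑ c, p a b * k a c := by
        exact Finset.sum_congr rfl (fun b _ => Finset.sum_comm)
    _ = ∑ a, ∑ b, ∑ c, p a b * k a c := Finset.sum_comm
    _ = ∑ a, ∑ b, p a b := by
        refine Finset.sum_congr rfl (fun a _ => Finset.sum_congr rfl (fun b _ => ?_))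
        rw [← Finset.mul_sum, hk.2 a, mul_one]
    _ = 1 := hp.2

/-- Any finite-alphabet channel can be relabeled to a `Fin n` alphabet. -/
lemma exists_fin_channel (p : α → β → ℝ) (k : α → γ → ℝ) (hk : IsChannel k) :
    ∃ (n : ℕ) (k' : α → Fin n → ℝ), IsChannel k' ∧
      miXT p k' = miXT p k ∧ miYT p k' = miYT p k := by
  set e := Fintype.equivFin γ
  refine ⟨Fintype.card γ, fun a c => k a (e.symm c), ⟨fun a c => hk.1 a _, fun a => ?_⟩,
    ?_, ?_⟩
  · rw [Fintype.sum_equiv e.symm (fun c' => k a (e.symm c')) (fun c => k a c)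
      (fun c' => rfl)]
    exact hk.2 a
  · exact mi_relabel e (jXT p k)
  · exact mi_relabel e (jYT p k)

end Aux

end BN

namespace BN
/-- `r ↦ PF(r)` is nondecreasing and convex on `[0, H(X)]`. -/
theorem PF_mono_convex {α β : Type*} [Fintype α] [Fintype β]
    (p : α → β → ℝ) (hp : IsJointPMF p) :
    (∀ r₁ r₂ : ℝ, 0 ≤ r₁ → r₁ ≤ r₂ → r₂ ≤ ent (fstM p) → PF p r₁ ≤ PF p r₂) ∧
    (∀ r₁ r₂ t : ℝ, r₁ ∈ Set.Icc 0 (ent (fstM p)) → r₂ ∈ Set.Icc 0 (ent (fstM p)) →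
      0 ≤ t → t ≤ 1 →
      PF p (t * r₁ + (1 - t) * r₂) ≤ t * PF p r₁ + (1 - t) * PF p r₂) := by
  have hPF : ∀ r : ℝ, PF p r = sInf {v | ∃ (n : ℕ) (k : α → Fin n → ℝ),
      IsChannel k ∧ r ≤ miXT p k ∧ v = miYT p k} := fun r => rfl
  have hbdd : ∀ r : ℝ, BddBelow {v | ∃ (n : ℕ) (k : α → Fin n → ℝ),
      IsChannel k ∧ r ≤ miXT p k ∧ v = miYT p k} := by
    intro r
    refine ⟨0, ?_⟩
    rintro v ⟨n, k, hk, _, rfl⟩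
    exact miYT_nonneg p hp k hk
  have hne : ∀ r : ℝ, r ≤ ent (fstM p) → Set.Nonempty {v | ∃ (n : ℕ) (k : α → Fin n → ℝ),
      IsChannel k ∧ r ≤ miXT p k ∧ v = miYT p k} := by
    intro r hr
    have hch : IsChannel (fun a c => if Fintype.equivFin α a = c then (1:ℝ) else 0) := by
      constructor
      · intro a c; dsimp only; split <;> norm_num
      · intro a; simp
    exact ⟨_, Fintype.card α, _, hch, by rw [miXT_ident p hp]; exact hr, rfl⟩
  constructor
  · intro r₁ r₂ _ h12 h2
    rw [hPF, hPF]
    refine csInf_le_csInf (hbdd r₁) (hne r₂ h2) ?_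
    rintro v ⟨n, k, hk, hm, rfl⟩
    exact ⟨n, k, hk, le_trans h12 hm, rfl⟩
  · intro r₁ r₂ t h1 h2 ht0 ht1
    have key : ∀ ε : ℝ, 0 < ε →
        PF p (t * r₁ + (1 - t) * r₂) ≤ t * PF p r₁ + (1 - t) * PF p r₂ + ε := by
      intro ε hε
      obtain ⟨v₁, hv₁, hlt₁⟩ := exists_lt_of_csInf_lt (hne r₁ h1.2)
        (lt_add_of_pos_right _ hε)
      obtain ⟨v₂, hv₂, hlt₂⟩ := exists_lt_of_csInf_lt (hne r₂ h2.2)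
        (lt_add_of_pos_right _ hε)
      obtain ⟨n₁, k₁, hk₁, hm₁, rfl⟩ := hv₁
      obtain ⟨n₂, k₂, hk₂, hm₂, rfl⟩ := hv₂
      have hkc := kmix_channel t ht0 ht1 k₁ k₂ hk₁ hk₂
      obtain ⟨n, k', hk', hX, hY⟩ := exists_fin_channel p (kmix t k₁ k₂) hkc
      have hXmix : miXT p (kmix t k₁ k₂) = t * miXT p k₁ + (1 - t) * miXT p k₂ := by
        unfold miXT
        rw [jXT_kmix]
        exact mi_jmix t _ _ (fun a => by rw [fstM_jXT p k₂ hk₂ a, fstM_jXT p k₁ hk₁ a])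
      have hYmix : miYT p (kmix t k₁ k₂) = t * miYT p k₁ + (1 - t) * miYT p k₂ := by
        unfold miYT
        rw [jYT_kmix]
        exact mi_jmix t _ _ (fun b => by rw [fstM_jYT p k₂ hk₂ b, fstM_jYT p k₁ hk₁ b])
      have hmem : miYT p k' ∈ {v | ∃ (n : ℕ) (k : α → Fin n → ℝ),
          IsChannel k ∧ t * r₁ + (1 - t) * r₂ ≤ miXT p k ∧ v = miYT p k} := by
        refine ⟨n, k', hk', ?_, rfl⟩
        rw [hX, hXmix]
        have h1' := mul_le_mul_of_nonneg_left hm₁ ht0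
        have h2' := mul_le_mul_of_nonneg_left hm₂ (by linarith : (0:ℝ) ≤ 1 - t)
        linarith
      have hle : PF p (t * r₁ + (1 - t) * r₂) ≤ miYT p k' := by
        rw [hPF]
        exact csInf_le (hbdd _) hmem
      rw [hY, hYmix] at hle
      rw [← hPF r₁] at hlt₁
      rw [← hPF r₂] at hlt₂
      have h1' := mul_le_mul_of_nonneg_left hlt₁.le ht0
      have h2' := mul_le_mul_of_nonneg_left hlt₂.le (by linarith : (0:ℝ) ≤ 1 - t)
      nlinarith
    by_contra hlt
    push_neg at hlt
    have hε : 0 < (PF p (t * r₁ + (1 - t) * r₂) - (t * PF p r₁ + (1 - t) * PF p r₂)) / 2 := by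
      linarith
    have := key _ hε
    linarith
end BN
end

section
/- There exist dependent binary random variables Y, T with I(Y;T) > 0 but Pc(Y|T) = Pc(Y) (hence I_∞(Y;T) = 0): take Y ∼ Bernoulli(p), P_{T|Y=0} = Bernoulli(δ), P_{T|Y=1} = Bernoulli(η) with δ, η ≤ 1/2 < p and (1−δ)(1−p) ≤ ηp, δ ≠ η. -/
open Real BigOperators

namespace BN

noncomputable def pcMarg {α : Type*} [Fintype α] (q : α → ℝ) : ℝ := ⨆ a, q a

noncomputable def pcCond {α β : Type*} [Fintype α] [Fintype β] (p : α → β → ℝ) : ℝ :=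
  ∑ b, ⨆ a, p a b

/-- Bernoulli pmf on `Bool`: probability `q` of `true`. -/
def ber (q : ℝ) : Bool → ℝ := fun b => if b then q else 1 - q

lemma sup_bool' (g : Bool → ℝ) : (⨆ b, g b) = max (g true) (g false) := by
  apply le_antisymm
  · exact ciSup_le (fun b => by cases b <;> simp)
  · exact max_le (le_ciSup (Set.Finite.bddAbove (Set.finite_range g)) true)
      (le_ciSup (Set.Finite.bddAbove (Set.finite_range g)) false)

lemma gibbs_ge' (x q : ℝ) (hx : 0 ≤ x) (hq : 0 < q) : x - q ≤ x * Real.log (x / q) := by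
  rcases eq_or_lt_of_le hx with h|h
  · simp [← h]; linarith
  · have h1 : Real.log (q / x) ≤ q / x - 1 := Real.log_le_sub_one_of_pos (by positivity)
    have h2 : Real.log (q / x) = - Real.log (x / q) := by
      rw [Real.log_div hq.ne' h.ne', Real.log_div h.ne' hq.ne']; ring
    have h3 : 1 - q / x ≤ Real.log (x / q) := by linarith
    have h4 : x * (1 - q/x) ≤ x * Real.log (x/q) := by nlinarith
    have h5 : x * (1 - q/x) = x - q := by field_simp
    linarith

lemma gibbs_gt' (x q : ℝ) (hx : 0 < x) (hq : 0 < q) (hne : x ≠ q) : x - q < x * Real.log (x / q) := by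
  have hq1 : q / x ≠ 1 := by
    intro h; apply hne; field_simp at h; linarith
  have h1 : Real.log (q / x) < q / x - 1 := Real.log_lt_sub_one_of_pos (by positivity) hq1
  have h2 : Real.log (q / x) = - Real.log (x / q) := by
    rw [Real.log_div hq.ne' hx.ne', Real.log_div hx.ne' hq.ne']; ring
  have h3 : 1 - q / x < Real.log (x / q) := by linarith
  have h4 : x * (1 - q/x) < x * Real.log (x/q) := by nlinarith
  have h5 : x * (1 - q/x) = x - q := by field_simp
  linarith


/-- dependent binary `Y, T` with `I(Y;T) > 0` but `Pc(Y|T) = Pc(Y)`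
(hence `I_∞(Y;T) = 0`): `Y ∼ Bernoulli(p)`, `T|Y=0 ∼ Bernoulli(δ)`,
`T|Y=1 ∼ Bernoulli(η)` with `δ, η ≤ 1/2 < p` and `(1−δ)(1−p) ≤ ηp`, `δ ≠ η`. -/
theorem dependent_but_useless (p δ η : ℝ)
    (hδ0 : 0 ≤ δ) (hη0 : 0 ≤ η) (hδ : δ ≤ 1/2) (hη : η ≤ 1/2)
    (hp : 1/2 < p) (hp1 : p < 1)
    (hcond : (1 - δ) * (1 - p) ≤ η * p) (hne : δ ≠ η) :
    mi (fun (y t : Bool) => ber p y * ber (if y then η else δ) t) > 0 ∧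
    pcCond (fun (y t : Bool) => ber p y * ber (if y then η else δ) t) =
      pcMarg (fstM (fun (y t : Bool) => ber p y * ber (if y then η else δ) t)) := by
  have hp0 : 0 < p := by linarith
  have hp1' : 0 < 1 - p := by linarith
  have hη0' : 0 < η := by nlinarith
  have hη1 : 0 < 1 - η := by linarith
  have hδ1 : 0 < 1 - δ := by linarith
  have hmT : 0 < p * η + (1 - p) * δ := by positivity
  have hmF : 0 < p * (1 - η) + (1 - p) * (1 - δ) := by positivity
  constructor
  · simp only [mi, fstM, sndM, ber, Fintype.sum_bool]
    simp only [if_true, if_false, Bool.false_eq_true, Bool.true_eq_false, ite_true, ite_false]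
    have e1 : p * η + p * (1 - η) = p := by ring
    have e2 : (1 - p) * δ + (1 - p) * (1 - δ) = 1 - p := by ring
    rw [e1, e2]
    have hne1 : p * η ≠ p * (p * η + (1 - p) * δ) := by
      intro h
      have h' : η = p * η + (1 - p) * δ := mul_left_cancel₀ hp0.ne' h
      have h'' : (1 - p) * (η - δ) = 0 := by linarith
      rcases mul_eq_zero.mp h'' with h3 | h3
      · linarith
      · exact hne (by linarith)
    have g1 : p * η - p * (p * η + (1 - p) * δ) <
        p * η * Real.log (p * η / (p * (p * η + (1 - p) * δ))) :=
      gibbs_gt' _ _ (by positivity) (by positivity) hne1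
    have g2 : p * (1 - η) - p * (p * (1 - η) + (1 - p) * (1 - δ)) ≤
        p * (1 - η) * Real.log (p * (1 - η) / (p * (p * (1 - η) + (1 - p) * (1 - δ)))) :=
      gibbs_ge' _ _ (by positivity) (by positivity)
    have g3 : (1 - p) * δ - (1 - p) * (p * η + (1 - p) * δ) ≤
        (1 - p) * δ * Real.log ((1 - p) * δ / ((1 - p) * (p * η + (1 - p) * δ))) :=
      gibbs_ge' _ _ (by positivity) (by positivity)
    have g4 : (1 - p) * (1 - δ) - (1 - p) * (p * (1 - η) + (1 - p) * (1 - δ)) ≤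
        (1 - p) * (1 - δ) *
          Real.log ((1 - p) * (1 - δ) / ((1 - p) * (p * (1 - η) + (1 - p) * (1 - δ)))) :=
      gibbs_ge' _ _ (by positivity) (by positivity)
    have hsum : (p * η - p * (p * η + (1 - p) * δ)) +
        (p * (1 - η) - p * (p * (1 - η) + (1 - p) * (1 - δ))) +
        ((1 - p) * δ - (1 - p) * (p * η + (1 - p) * δ)) +
        ((1 - p) * (1 - δ) - (1 - p) * (p * (1 - η) + (1 - p) * (1 - δ))) = 0 := by ring
    linarith
  · simp only [pcCond, pcMarg, fstM, ber, Fintype.sum_bool, sup_bool']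
    simp only [if_true, if_false, Bool.false_eq_true, Bool.true_eq_false, ite_true, ite_false]
    have hbd : (1 - p) * δ ≤ p * η := by nlinarith
    have hac : (1 - p) * (1 - δ) ≤ p * (1 - η) := by nlinarith
    rw [max_eq_left hbd, max_eq_left hac, max_eq_left (by linarith : (1-p)*δ + (1-p)*(1-δ) ≤ p*η + p*(1-η))]

end BN
end

section
/- If Y is uniform on a finite set, then for any finite random variable T, I(Y;T) ≤ I_∞(Y;T) = log(|𝒴| · Pc(Y|T)). -/
open Real BigOperators

namespace BN

/-!
Write `q`, `s` for the marginals of `p` and `M b = max_a p(a,b)`. Since `p(a,b) ≤ q(a) c(b)`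
with `c = |𝒴| M` when `Y` is uniform, each summand of `I(Y;T)` is at most
`p(a,b) log (c(b) / s(b))`, so `I(Y;T) ≤ ∑_b s(b) log (c(b) / s(b)) ≤ log ∑_b c(b)`,
the last step being Gibbs' inequality `log x ≤ x - 1` applied with weights `s`.
-/

section

open Finset

variable {α β : Type*} [Fintype α] [Fintype β]

theorem mul_log_div_le {s c C : ℝ} (hs : 0 ≤ s) (hsc : s ≤ c) (hC : 0 < C) :
    s * log (c / s) ≤ s * log C + c / C - s := by
  rcases hs.eq_or_lt with rfl | hs
  · simp only [zero_mul, zero_add, sub_zero]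
    exact div_nonneg hsc hC.le
  have hc : 0 < c := hs.trans_le hsc
  have hgibbs := log_le_sub_one_of_pos (show 0 < c / (s * C) by positivity)
  have hsplit : log (c / s) = log C + log (c / (s * C)) := by
    rw [← log_mul hC.ne' (by positivity)]
    congr 1
    field_simp
  calc s * log (c / s) = s * log C + s * log (c / (s * C)) := by rw [hsplit, mul_add]
    _ ≤ s * log C + s * (c / (s * C) - 1) := by gcongr
    _ = s * log C + c / C - s := by field_simp; ring

theorem sum_mul_log_div_le_log_sum {s c : β → ℝ} (hs : IsPMF s) (hsc : ∀ b, s b ≤ c b) :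
    ∑ b, s b * log (c b / s b) ≤ log (∑ b, c b) := by
  obtain ⟨hs0, hs1⟩ := hs
  have hC : 0 < ∑ b, c b := by
    have := sum_le_sum fun b (_ : b ∈ univ) => hsc b
    linarith
  calc ∑ b, s b * log (c b / s b)
      ≤ ∑ b, (s b * log (∑ b, c b) + c b / ∑ b, c b - s b) :=
        sum_le_sum fun b _ => mul_log_div_le (hs0 b) (hsc b) hC
    _ = log (∑ b, c b) := by
        rw [sum_sub_distrib, sum_add_distrib, ← sum_mul, ← sum_div, hs1, div_self hC.ne']
        ring

theorem isPMF_sndM {p : α → β → ℝ} (hp : IsJointPMF p) : IsPMF (sndM p) :=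
  ⟨fun b => sum_nonneg fun a _ => hp.1 a b, by rw [← hp.2, sum_comm]; rfl⟩

theorem mi_le_log_sum_of_le_fstM_mul {p : α → β → ℝ} (hp : IsJointPMF p) {c : β → ℝ}
    (hc : ∀ a b, p a b ≤ fstM p a * c b) : mi p ≤ log (∑ b, c b) := by
  have hterm : ∀ a b, p a b * log (p a b / (fstM p a * sndM p b))
      ≤ p a b * log (c b / sndM p b) := by
    intro a b
    rcases (hp.1 a b).eq_or_lt with h | h
    · simp [← h]
    have hq : 0 < fstM p a := h.trans_le (single_le_sum (fun b _ => hp.1 a b) (mem_univ b))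
    have hs : 0 < sndM p b := h.trans_le (single_le_sum (fun a _ => hp.1 a b) (mem_univ a))
    refine mul_le_mul_of_nonneg_left (log_le_log (by positivity) ?_) h.le
    rw [div_le_div_iff₀ (by positivity) hs]
    calc p a b * sndM p b ≤ fstM p a * c b * sndM p b := by gcongr; exact hc a b
      _ = c b * (fstM p a * sndM p b) := by ring
  have hsc : ∀ b, sndM p b ≤ c b := fun b =>
    calc sndM p b ≤ ∑ a, fstM p a * c b := sum_le_sum fun a _ => hc a b
      _ = c b := by rw [← sum_mul, show ∑ a, fstM p a = 1 from hp.2, one_mul]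
  calc mi p = ∑ b, ∑ a, p a b * log (p a b / (fstM p a * sndM p b)) := sum_comm
    _ ≤ ∑ b, ∑ a, p a b * log (c b / sndM p b) :=
        sum_le_sum fun b _ => sum_le_sum fun a _ => hterm a b
    _ = ∑ b, sndM p b * log (c b / sndM p b) := by simp only [sndM, sum_mul]
    _ ≤ log (∑ b, c b) := sum_mul_log_div_le_log_sum (isPMF_sndM hp) hsc

end

/-- if `Y` is uniform, then
`I(Y;T) ≤ I_∞(Y;T) = log(|𝒴|·Pc(Y|T))`.  Here `p` is the joint pmf of `(Y,T)`. -/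
theorem uniform_mi_le_iInfty {α β : Type*} [Fintype α] [Fintype β] [Nonempty α]
    (p : α → β → ℝ) (hp : IsJointPMF p)
    (hunif : ∀ a, fstM p a = 1 / Fintype.card α) :
    Real.log (pcCond p / pcMarg (fstM p)) = Real.log (Fintype.card α * pcCond p) ∧
    mi p ≤ Real.log (Fintype.card α * pcCond p) := by
  have hN : (0 : ℝ) < Fintype.card α := by exact_mod_cast Fintype.card_pos
  have hpcMarg : pcMarg (fstM p) = 1 / Fintype.card α := by simp [pcMarg, hunif]
  refine ⟨by rw [hpcMarg, div_div_eq_mul_div, div_one, mul_comm], ?_⟩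
  have hdom : ∀ a b, p a b ≤ fstM p a * (Fintype.card α * ⨆ a, p a b) := fun a b => by
    rw [hunif, ← mul_assoc, one_div_mul_cancel hN.ne', one_mul]
    exact le_ciSup (Set.finite_range fun a => p a b).bddAbove a
  simpa only [pcCond, Finset.mul_sum] using mi_le_log_sum_of_le_fstM_mul hp hdom

end BN
end

section
/- Let 𝒳 = {1,…,m}, sorted so that P_X(1)D_KL(P_{Y|X=1}‖P_Y) ≥ … ≥ P_X(m)D_KL(P_{Y|X=m}‖P_Y), and let f(x) = min(x, M) for integer M ≤ m, Z = f(X). Then I(Y;Z) ≥ ((M−1)/|𝒳|) I(X;Y). -/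
open Real BigOperators

namespace BN

/-- `P_X(x)·D_KL(P_{Y|X=x} ‖ P_Y)`, the contribution of symbol `x` to `I(X;Y)`. -/
noncomputable def contrib {m : ℕ} {β : Type*} [Fintype β]
    (p : Fin m → β → ℝ) (x : Fin m) : ℝ :=
  ∑ y, p x y * Real.log (p x y / (fstM p x * sndM p y))

/-- the quantizer `f(x) = min(x, M)` (on `{0, …, m−1}`, merging all `x ≥ M−1`). -/
def quant (m M : ℕ) (hm : 0 < m) : Fin m → Fin m :=
  fun x => ⟨min x.1 (M - 1), lt_of_le_of_lt (min_le_left _ _) x.2⟩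

/-- joint pmf of `(Z, Y)` where `Z = f(X)`. -/
noncomputable def jZY {m : ℕ} {β : Type*} [Fintype β]
    (p : Fin m → β → ℝ) (f : Fin m → Fin m) : Fin m → β → ℝ :=
  fun z y => ∑ x, if f x = z then p x y else 0

lemma sub_le_mul_log_div {a b : ℝ} (ha : 0 ≤ a) (hb : 0 ≤ b) (h : b = 0 → a = 0) :
    a - b ≤ a * Real.log (a / b) := by
  rcases ha.eq_or_lt with h0 | hapos
  · simp [← h0]; linarith
  have hbpos : 0 < b := by
    rcases hb.eq_or_lt with hb0 | h1
    · exact absurd (h hb0.symm) (by linarith)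
    · exact h1
  have h2 : Real.log (b / a) ≤ b / a - 1 := Real.log_le_sub_one_of_pos (by positivity)
  have h3 : Real.log (a / b) = - Real.log (b / a) := by
    rw [← Real.log_inv, inv_div]
  rw [h3]
  have h4 : a * (b / a - 1) = b - a := by field_simp
  nlinarith

lemma contrib_nonneg {m : ℕ} {β : Type*} [Fintype β] {q : Fin m → β → ℝ}
    (hq : IsJointPMF q) (x : Fin m) : 0 ≤ contrib q x := by
  have hsnd1 : ∑ y, sndM q y = 1 := by
    rw [← hq.2]
    unfold sndM
    exact Finset.sum_comm
  have hfst : 0 ≤ fstM q x := Finset.sum_nonneg fun b _ => hq.1 x b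
  have hsndnn : ∀ y, 0 ≤ sndM q y := fun y => Finset.sum_nonneg fun a _ => hq.1 a y
  have key : ∀ y, q x y - fstM q x * sndM q y
      ≤ q x y * Real.log (q x y / (fstM q x * sndM q y)) := by
    intro y
    refine sub_le_mul_log_div (hq.1 x y) (mul_nonneg hfst (hsndnn y)) ?_
    intro h0
    rcases mul_eq_zero.1 h0 with h1 | h1
    · exact (Finset.sum_eq_zero_iff_of_nonneg (fun b _ => hq.1 x b)).1 h1 y (Finset.mem_univ y)
    · exact (Finset.sum_eq_zero_iff_of_nonneg (fun a _ => hq.1 a y)).1 h1 x (Finset.mem_univ x)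
  calc (0:ℝ) = fstM q x - fstM q x * 1 := by ring
    _ = ∑ y, (q x y - fstM q x * sndM q y) := by
        rw [Finset.sum_sub_distrib, ← Finset.mul_sum, hsnd1]; rfl
    _ ≤ contrib q x := Finset.sum_le_sum fun y _ => key y

lemma jZY_nonneg {m : ℕ} {β : Type*} [Fintype β] {p : Fin m → β → ℝ}
    (hp : IsJointPMF p) (f : Fin m → Fin m) (z : Fin m) (y : β) : 0 ≤ jZY p f z y :=
  Finset.sum_nonneg fun x _ => by
    by_cases h : f x = z <;> simp [h, hp.1]

lemma sndM_jZY {m : ℕ} {β : Type*} [Fintype β] (p : Fin m → β → ℝ)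
    (f : Fin m → Fin m) (y : β) : sndM (jZY p f) y = sndM p y := by
  unfold sndM jZY
  rw [Finset.sum_comm]
  refine Finset.sum_congr rfl fun x _ => ?_
  simp

lemma jZY_isJoint {m : ℕ} {β : Type*} [Fintype β] {p : Fin m → β → ℝ}
    (hp : IsJointPMF p) (f : Fin m → Fin m) : IsJointPMF (jZY p f) := by
  refine ⟨jZY_nonneg hp f, ?_⟩
  calc ∑ z, ∑ y, jZY p f z y = ∑ y, ∑ z, jZY p f z y := Finset.sum_comm
    _ = ∑ y, sndM p y := Finset.sum_congr rfl fun y _ => sndM_jZY p f y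
    _ = ∑ y, ∑ x, p x y := rfl
    _ = 1 := by rw [← hp.2]; exact Finset.sum_comm

lemma jZY_quant_eq {m M : ℕ} {β : Type*} [Fintype β] (p : Fin m → β → ℝ)
    (hm : 0 < m) {z : Fin m} (hz : z.1 < M - 1) (y : β) :
    jZY p (quant m M hm) z y = p z y := by
  unfold jZY
  rw [Finset.sum_eq_single z]
  · rw [if_pos]
    exact Fin.ext (by simp [quant]; omega)
  · intro x _ hxz
    rw [if_neg]
    intro hq
    apply hxz
    have h1 : min x.1 (M-1) = z.1 := congrArg Fin.val hq
    exact Fin.ext (by omega)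
  · intro h; exact absurd (Finset.mem_univ z) h

lemma contrib_jZY_eq {m M : ℕ} {β : Type*} [Fintype β] (p : Fin m → β → ℝ)
    (hm : 0 < m) {z : Fin m} (hz : z.1 < M - 1) :
    contrib (jZY p (quant m M hm)) z = contrib p z := by
  have hfst : fstM (jZY p (quant m M hm)) z = fstM p z :=
    Finset.sum_congr rfl fun y _ => jZY_quant_eq p hm hz y
  unfold contrib
  refine Finset.sum_congr rfl fun y _ => ?_
  rw [jZY_quant_eq p hm hz y, hfst, sndM_jZY]

/-- with the alphabet sorted so that
`P_X(1)D(P_{Y|X=1}‖P_Y) ≥ ⋯ ≥ P_X(m)D(P_{Y|X=m}‖P_Y)` and `Z = min(X, M)`,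
one has `I(Y;Z) ≥ ((M−1)/|𝒳|)·I(X;Y)`. -/
theorem quantization_lower_bound {β : Type*} [Fintype β]
    (m M : ℕ) (hm : 0 < m) (hM : 1 ≤ M) (hMm : M ≤ m)
    (p : Fin m → β → ℝ) (hp : IsJointPMF p)
    (hsort : ∀ i j : Fin m, i ≤ j → contrib p j ≤ contrib p i) :
    ((M : ℝ) - 1) / m * mi p ≤ mi (jZY p (quant m M hm)) := by
  set f := quant m M hm with hf
  set s : Finset (Fin m) := Finset.univ.filter (fun z => z.1 < M-1) with hs
  have hMm' : M - 1 < m := by omega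
  have hcard : s.card = M - 1 := by
    have h1 : s = Finset.Iio (⟨M-1, hMm'⟩ : Fin m) := by
      ext z; simp [hs, Fin.lt_def]
    rw [h1, Fin.card_Iio]
  have hstep1 : ∑ z ∈ s, contrib p z ≤ mi (jZY p f) := by
    have h0 : mi (jZY p f) = ∑ z, contrib (jZY p f) z := rfl
    have h1 : ∑ z ∈ s, contrib p z = ∑ z ∈ s, contrib (jZY p f) z := by
      refine Finset.sum_congr rfl fun z hz => ?_
      have hz' : z.1 < M - 1 := by simpa [hs] using hz
      exact (contrib_jZY_eq p hm hz').symm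
    rw [h0, h1]
    exact Finset.sum_le_sum_of_subset_of_nonneg (Finset.subset_univ s)
      (fun z _ _ => contrib_nonneg (jZY_isJoint hp f) z)
  have hcheb : ((M-1 : ℕ):ℝ) * ∑ x, contrib p x ≤ (m:ℝ) * ∑ z ∈ s, contrib p z := by
    have hccard : sᶜ.card = m - (M-1) := by
      rw [Finset.card_compl, hcard]; simp
    have hkey : ((M-1:ℕ):ℝ) * ∑ x ∈ sᶜ, contrib p x
        ≤ ((m - (M-1):ℕ):ℝ) * ∑ z ∈ s, contrib p z := by
      calc ((M-1:ℕ):ℝ) * ∑ x ∈ sᶜ, contrib p x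
          = ∑ _z ∈ s, ∑ x ∈ sᶜ, contrib p x := by
            rw [Finset.sum_const, hcard, nsmul_eq_mul]
        _ ≤ ∑ z ∈ s, ∑ _x ∈ sᶜ, contrib p z := by
            refine Finset.sum_le_sum fun z hz => Finset.sum_le_sum fun x hx => ?_
            have hz' : z.1 < M-1 := by simpa [hs] using hz
            have hx' : ¬ x.1 < M-1 := by simpa [hs] using hx
            exact hsort z x (by omega)
        _ = ∑ z ∈ s, (((m - (M-1):ℕ):ℝ) * contrib p z) := by
            refine Finset.sum_congr rfl fun z _ => ?_
            rw [Finset.sum_const, hccard, nsmul_eq_mul]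
        _ = ((m - (M-1):ℕ):ℝ) * ∑ z ∈ s, contrib p z := by rw [Finset.mul_sum]
    have hsplit : ∑ x, contrib p x = ∑ z ∈ s, contrib p z + ∑ z ∈ sᶜ, contrib p z :=
      (Finset.sum_add_sum_compl s _).symm
    have hc1 : ((m - (M-1):ℕ):ℝ) = (m:ℝ) - ((M-1:ℕ):ℝ) := by
      rw [Nat.cast_sub (by omega)]
    rw [hc1] at hkey
    rw [hsplit]
    linarith
  have hM1 : ((M:ℝ)-1) = ((M-1:ℕ):ℝ) := by
    rw [Nat.cast_sub hM]; simp
  have hmpos : (0:ℝ) < m := Nat.cast_pos.2 hm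
  rw [hM1, div_mul_eq_mul_div, div_le_iff₀ hmpos]
  have hmi : mi p = ∑ x, contrib p x := rfl
  rw [hmi]
  calc ((M-1:ℕ):ℝ) * ∑ x, contrib p x ≤ (m:ℝ) * ∑ z ∈ s, contrib p z := hcheb
    _ ≤ (m:ℝ) * mi (jZY p f) := by
        exact mul_le_mul_of_nonneg_left hstep1 (le_of_lt hmpos)
    _ = mi (jZY p f) * m := mul_comm _ _

end BN
end

section
/- For α ∈ [1,∞], the Arimoto conditional entropy H_α(X|T) satisfies ((γ−1)/γ) H_γ(X|T) ≤ H_∞(X|T) ≤ H_γ(X|T) for all γ > 1. -/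
open Real BigOperators

namespace BN

/-- Arimoto conditional entropy `H_γ(X|T)` of the first coordinate given the
second, for a joint pmf `p` of `(X,T)`:
`H_γ(X|T) = (γ/(1−γ)) log Σ_t (Σ_x p(x,t)^γ)^{1/γ}`. -/
noncomputable def arimotoCondEnt {α β : Type*} [Fintype α] [Fintype β]
    (g : ℝ) (p : α → β → ℝ) : ℝ :=
  (g / (1 - g)) * Real.log (∑ b, (∑ a, p a b ^ g) ^ (1 / g))

/-- Arimoto conditional min-entropy `H_∞(X|T) = −log Σ_t max_x p(x,t)`. -/
noncomputable def minCondEnt {α β : Type*} [Fintype α] [Fintype β] [Nonempty α]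
    (p : α → β → ℝ) : ℝ :=
  -Real.log (∑ b, ⨆ a, p a b)

/-!
Write `m_t = max_x p(x,t)` and `s_t = Σ_x p(x,t)`. Column by column,
`m_t ≤ ‖p(·,t)‖_γ ≤ m_t^{1-1/γ} s_t^{1/γ}`, the second bound because `p^γ ≤ m_t^{γ-1} p`.
Summing over `t` and applying Hölder with exponents `γ/(γ-1)` and `γ` to the right-hand side
(where `Σ_t s_t = 1`) gives `Σ_t m_t ≤ Σ_t ‖p(·,t)‖_γ ≤ (Σ_t m_t)^{1-1/γ}`; taking logarithms
yields both inequalities.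
-/

open Finset

section HolderAndNorms

variable {ι : Type*}

theorem sum_rpow_mul_rpow_le_of_nonneg (s : Finset ι) {f g : ι → ℝ} {p q : ℝ}
    (hpq : p.HolderConjugate q) (hf : ∀ i ∈ s, 0 ≤ f i) (hg : ∀ i ∈ s, 0 ≤ g i) :
    ∑ i ∈ s, f i ^ (1 / p) * g i ^ (1 / q) ≤
      (∑ i ∈ s, f i) ^ (1 / p) * (∑ i ∈ s, g i) ^ (1 / q) := by
  have holder := inner_le_Lp_mul_Lq_of_nonneg s hpq
    (f := fun i => f i ^ (1 / p)) (g := fun i => g i ^ (1 / q))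
    (fun i hi => rpow_nonneg (hf i hi) _) (fun i hi => rpow_nonneg (hg i hi) _)
  convert holder using 3 <;> refine sum_congr rfl fun i hi => ?_
  · rw [← rpow_mul (hf i hi), one_div_mul_cancel hpq.ne_zero, rpow_one]
  · rw [← rpow_mul (hg i hi), one_div_mul_cancel hpq.symm.ne_zero, rpow_one]

variable [Fintype ι] {f : ι → ℝ} {g : ℝ}

theorem iSup_le_sum_rpow_rpow_one_div (hf : ∀ i, 0 ≤ f i) (hg : 0 < g) :
    ⨆ i, f i ≤ (∑ i, f i ^ g) ^ (1 / g) := by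
  have hsum : 0 ≤ ∑ i, f i ^ g := sum_nonneg fun i _ => rpow_nonneg (hf i) g
  refine Real.iSup_le (fun i => ?_) (rpow_nonneg hsum _)
  calc f i = (f i ^ g) ^ (1 / g) := by rw [one_div, rpow_rpow_inv (hf i) hg.ne']
    _ ≤ (∑ i, f i ^ g) ^ (1 / g) := by
      gcongr
      exacts [rpow_nonneg (hf i) g,
        single_le_sum (fun j _ => rpow_nonneg (hf j) g) (mem_univ i)]

theorem sum_rpow_le_iSup_rpow_mul_sum (hf : ∀ i, 0 ≤ f i) (hg : 1 ≤ g) :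
    ∑ i, f i ^ g ≤ (⨆ i, f i) ^ (g - 1) * ∑ i, f i := by
  rw [mul_sum]
  refine sum_le_sum fun i _ => ?_
  calc f i ^ g = f i ^ (g - 1) * f i := by
        rw [← rpow_add_one' (hf i) (by linarith), sub_add_cancel]
    _ ≤ (⨆ i, f i) ^ (g - 1) * f i :=
      mul_le_mul_of_nonneg_right
        (rpow_le_rpow (hf i) (le_ciSup (Finite.bddAbove_range f) i) (by linarith)) (hf i)

theorem sum_rpow_rpow_one_div_le_iSup_rpow_mul (hf : ∀ i, 0 ≤ f i) (hg : 1 ≤ g) :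
    (∑ i, f i ^ g) ^ (1 / g) ≤ (⨆ i, f i) ^ ((g - 1) / g) * (∑ i, f i) ^ (1 / g) := by
  have hsup : 0 ≤ ⨆ i, f i := Real.iSup_nonneg hf
  calc (∑ i, f i ^ g) ^ (1 / g) ≤ ((⨆ i, f i) ^ (g - 1) * ∑ i, f i) ^ (1 / g) := by
        exact rpow_le_rpow (sum_nonneg fun i _ => rpow_nonneg (hf i) g)
          (sum_rpow_le_iSup_rpow_mul_sum hf hg) (by positivity)
    _ = (⨆ i, f i) ^ ((g - 1) / g) * (∑ i, f i) ^ (1 / g) := by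
      rw [mul_rpow (rpow_nonneg hsup _) (sum_nonneg fun i _ => hf i), ← rpow_mul hsup]
      ring_nf

end HolderAndNorms

section JointPMF

variable {α β : Type*} [Fintype α] [Fintype β] {p : α → β → ℝ}

theorem IsJointPMF.sum_iSup_pos (hp : IsJointPMF p) : 0 < ∑ b, ⨆ a, p a b := by
  have h : (1 : ℝ) ≤ Fintype.card α * ∑ b, ⨆ a, p a b :=
    calc (1 : ℝ) = ∑ a, ∑ b, p a b := hp.2.symm
      _ ≤ ∑ _a : α, ∑ b, ⨆ a, p a b :=
        sum_le_sum fun a _ => sum_le_sum fun b _ =>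
          le_ciSup (Finite.bddAbove_range fun a => p a b) a
      _ = Fintype.card α * ∑ b, ⨆ a, p a b := by rw [sum_const, card_univ, nsmul_eq_mul]
  exact pos_of_mul_pos_right (by linarith) (Nat.cast_nonneg _)

theorem IsJointPMF.sum_rpow_rpow_one_div_le_sum_iSup_rpow (hp : IsJointPMF p) {g : ℝ}
    (hg : 1 < g) :
    ∑ b, (∑ a, p a b ^ g) ^ (1 / g) ≤ (∑ b, ⨆ a, p a b) ^ ((g - 1) / g) := by
  have hpq : (g / (g - 1)).HolderConjugate g := (Real.HolderConjugate.conjExponent hg).symm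
  calc ∑ b, (∑ a, p a b ^ g) ^ (1 / g)
      ≤ ∑ b, (⨆ a, p a b) ^ ((g - 1) / g) * (∑ a, p a b) ^ (1 / g) :=
        sum_le_sum fun b _ => sum_rpow_rpow_one_div_le_iSup_rpow_mul (hp.1 · b) hg.le
    _ ≤ (∑ b, ⨆ a, p a b) ^ ((g - 1) / g) * (∑ b, ∑ a, p a b) ^ (1 / g) := by
        simpa only [one_div_div] using sum_rpow_mul_rpow_le_of_nonneg univ hpq
          (fun b _ => Real.iSup_nonneg (hp.1 · b)) (fun b _ => sum_nonneg fun a _ => hp.1 a b)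
    _ = (∑ b, ⨆ a, p a b) ^ ((g - 1) / g) := by rw [sum_comm, hp.2, one_rpow, mul_one]

end JointPMF

/-- `((γ−1)/γ)·H_γ(X|T) ≤ H_∞(X|T) ≤ H_γ(X|T)` for all `γ > 1`. -/
theorem arimoto_sandwich {α β : Type*} [Fintype α] [Fintype β] [Nonempty α]
    (p : α → β → ℝ) (hp : IsJointPMF p) (g : ℝ) (hg : 1 < g) :
    (g - 1) / g * arimotoCondEnt g p ≤ minCondEnt p ∧
      minCondEnt p ≤ arimotoCondEnt g p := by
  set M := ∑ b, ⨆ a, p a b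
  set S := ∑ b, (∑ a, p a b ^ g) ^ (1 / g)
  have hM : 0 < M := hp.sum_iSup_pos
  have hMS : M ≤ S := sum_le_sum fun b _ =>
    iSup_le_sum_rpow_rpow_one_div (hp.1 · b) (by linarith)
  have hSM : log S ≤ (g - 1) / g * log M := by
    rw [← log_rpow hM]
    exact log_le_log (hM.trans_le hMS) (hp.sum_rpow_rpow_one_div_le_sum_iSup_rpow hg)
  have hH : arimotoCondEnt g p = -(g / (g - 1) * log S) := by
    rw [arimotoCondEnt, ← neg_div_neg_eq, neg_sub, neg_div, neg_mul]
  have hg' : 0 < g - 1 := by linarith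
  have hg0 : 0 < g := by linarith
  have hinv : (g - 1) / g * (g / (g - 1)) = 1 := by field_simp
  refine ⟨?_, ?_⟩
  · rw [hH, minCondEnt, mul_neg, ← mul_assoc, hinv, one_mul]
    exact neg_le_neg (log_le_log hM hMS)
  · rw [hH, minCondEnt, neg_le_neg_iff]
    calc g / (g - 1) * log S ≤ g / (g - 1) * ((g - 1) / g * log M) := by gcongr
      _ = log M := by field_simp

end BN
end

section
/- Fix x₀ ∈ 𝒳 with P_X(x₀) > 0 and δ ∈ (0,1]. Define the binary T by P(T=1|X=x) = δ·1{x=x₀}. Then I(X;T) = h_b(δ P_X(x₀)) − P_X(x₀) h_b(δ), and as δ → 0, I(X;T) = −δ P_X(x₀) log P_X(x₀) + o(δ) and I(Y;T) = δ P_X(x₀) D_KL(P_{Y|X=x₀}‖P_Y) + o(δ). -/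
open Real BigOperators

open Asymptotics

namespace BN

/-- binary entropy function (in nats). -/
noncomputable def hB (q : ℝ) : ℝ := -q * Real.log q - (1 - q) * Real.log (1 - q)

/-- the channel `P(T=1|X=x) = δ·1{x = x₀}`. -/
def pointChannel {α : Type*} [DecidableEq α] (x₀ : α) (δ : ℝ) : α → Bool → ℝ :=
  fun x t => if t then (if x = x₀ then δ else 0) else (if x = x₀ then 1 - δ else 1)

section Aux
set_option linter.unusedSectionVars false
open Filter Asymptotics

variable {α β : Type*} [Fintype α] [Fintype β] [DecidableEq α]

lemma xlog_div (x y : ℝ) (h : y = 0 → x = 0) :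
    x * Real.log (x / y) = x * Real.log x - x * Real.log y := by
  rcases eq_or_ne x 0 with rfl | hx
  · simp
  rcases eq_or_ne y 0 with rfl | hy
  · exact absurd (h rfl) hx
  rw [Real.log_div hx hy]; ring

lemma xlog_cancel (x c : ℝ) : x * Real.log (x / (x * c)) = x * (- Real.log c) := by
  rcases eq_or_ne x 0 with rfl | hx
  · simp
  · rw [← div_div, div_self hx, one_div, Real.log_inv]

lemma fstM_nonneg (p : α → β → ℝ) (hp : IsJointPMF p) (a : α) : 0 ≤ fstM p a :=
  Finset.sum_nonneg fun b _ => hp.1 a b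

lemma sum_fstM (p : α → β → ℝ) (hp : IsJointPMF p) : ∑ a, fstM p a = 1 := hp.2

lemma fstM_le_one (p : α → β → ℝ) (hp : IsJointPMF p) (a : α) : fstM p a ≤ 1 := by
  rw [← sum_fstM p hp]
  exact Finset.single_le_sum (fun a _ => fstM_nonneg p hp a) (Finset.mem_univ a)

lemma jXT_fst (p : α → β → ℝ) (x₀ : α) (δ : ℝ) (a : α) :
    fstM (jXT p (pointChannel x₀ δ)) a = fstM p a := by
  by_cases h : a = x₀ <;>
    simp [fstM, jXT, pointChannel, Fintype.sum_bool, h] <;> ring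

lemma jXT_snd_true (p : α → β → ℝ) (x₀ : α) (δ : ℝ) :
    sndM (jXT p (pointChannel x₀ δ)) true = fstM p x₀ * δ := by
  simp only [sndM, jXT, pointChannel, if_true, mul_ite, mul_zero]
  simp

lemma jXT_snd_false (p : α → β → ℝ) (hp : IsJointPMF p) (x₀ : α) (δ : ℝ) :
    sndM (jXT p (pointChannel x₀ δ)) false = 1 - fstM p x₀ * δ := by
  have h : ∀ a, (fstM p a) * (if a = x₀ then 1 - δ else 1)
      = fstM p a - (if a = x₀ then fstM p a * δ else 0) := by
    intro a; by_cases h : a = x₀ <;> simp [h] <;> ring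
  simp only [sndM, jXT, pointChannel, Bool.false_eq_true, if_false]
  rw [Finset.sum_congr rfl fun a _ => h a, Finset.sum_sub_distrib, sum_fstM p hp]
  simp


lemma miXT_formula (p : α → β → ℝ) (hp : IsJointPMF p) (x₀ : α) (hx₀ : 0 < fstM p x₀)
    {δ : ℝ} (hδ0 : 0 < δ) (hδ1 : δ ≤ 1) :
    miXT p (pointChannel x₀ δ) = hB (δ * fstM p x₀) - fstM p x₀ * hB δ := by
  set P := fstM p x₀ with hPdef
  have hP0 : (0:ℝ) < P := hx₀
  have hP1 : P ≤ 1 := fstM_le_one p hp x₀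
  have key : miXT p (pointChannel x₀ δ) =
      (P * δ * (- Real.log P)
        + (P * (1 - δ)) * Real.log ((P * (1 - δ)) / (P * (1 - P * δ))))
      + (1 - P) * (- Real.log (1 - P * δ)) := by
    rw [miXT, mi]
    rw [← Finset.add_sum_erase _ _ (Finset.mem_univ x₀)]
    congr 1
    · -- the x₀ term
      rw [Fintype.sum_bool]
      rw [jXT_fst, jXT_snd_true, jXT_snd_false p hp]
      simp only [jXT, pointChannel, if_true, Bool.false_eq_true, if_false, if_pos rfl, ← hPdef]
      rw [show P * (P * δ) = (P * δ) * P by ring, xlog_cancel]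
    · -- the other terms
      have hterm : ∀ a ∈ Finset.univ.erase x₀,
          (∑ t : Bool, jXT p (pointChannel x₀ δ) a t *
            Real.log (jXT p (pointChannel x₀ δ) a t /
              (fstM (jXT p (pointChannel x₀ δ)) a * sndM (jXT p (pointChannel x₀ δ)) t)))
          = fstM p a * (- Real.log (1 - P * δ)) := by
        intro a ha
        have hax : a ≠ x₀ := (Finset.mem_erase.mp ha).1
        rw [Fintype.sum_bool, jXT_fst, jXT_snd_true, jXT_snd_false p hp]
        simp only [jXT, pointChannel, if_true, Bool.false_eq_true, if_false, if_neg hax,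
          ← hPdef, mul_zero, zero_mul, zero_add, mul_one]
        exact xlog_cancel _ _
      rw [Finset.sum_congr rfl hterm, ← Finset.sum_mul,
        Finset.sum_erase_eq_sub (Finset.mem_univ x₀), sum_fstM p hp, ← hPdef]
  rw [key, hB, hB, mul_comm δ P, Real.log_mul hP0.ne' hδ0.ne',
    mul_div_mul_left _ _ hP0.ne']
  have hcond : (1 : ℝ) - P * δ = 0 → (1:ℝ) - δ = 0 := by intro h; nlinarith
  rw [show (P * (1 - δ)) * Real.log ((1 - δ) / (1 - P * δ))
      = P * ((1 - δ) * Real.log ((1 - δ) / (1 - P * δ))) by ring,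
    xlog_div _ _ hcond]
  ring
lemma hasDerivAt_term (q c w : ℝ) (hq : q ≠ 0) :
    HasDerivAt (fun δ : ℝ => (q - δ * c) * Real.log ((q - δ * c) / (q * (1 - δ * w))))
      (w * q - c) 0 := by
  have hu : HasDerivAt (fun δ : ℝ => q - δ * c) (-c) 0 := (hasDerivAt_mul_const c).const_sub q
  have hv : HasDerivAt (fun δ : ℝ => q * (1 - δ * w)) (q * -w) 0 := by
    simpa using (((hasDerivAt_mul_const w).const_sub 1).const_mul q)
  have hv0 : q * (1 - (0:ℝ) * w) ≠ 0 := by simpa using hq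
  have hw := hu.fun_div hv hv0
  have hw0 : (q - (0:ℝ) * c) / (q * (1 - (0:ℝ) * w)) ≠ 0 := by simp [hq]
  have hfull := hu.fun_mul (hw.log hw0)
  refine hfull.congr_deriv ?_
  have h1 : (q - (0:ℝ) * c) / (q * (1 - (0:ℝ) * w)) = 1 := by simp [div_self hq]
  rw [h1, Real.log_one]
  field_simp
  ring

lemma F_littleO (P : ℝ) :
    (fun δ : ℝ => P * ((1 - δ) * Real.log (1 - δ)) - (1 - δ * P) * Real.log (1 - δ * P))
      =o[nhds (0:ℝ)] fun δ => δ := by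
  have h1 : HasDerivAt (fun δ : ℝ => (1 - δ) * Real.log (1 - δ)) (-1) 0 := by
    have hu : HasDerivAt (fun δ : ℝ => 1 - δ) (-1) 0 := by
      simpa using (hasDerivAt_id (0:ℝ)).const_sub 1
    have := hu.fun_mul (hu.log (by norm_num))
    refine this.congr_deriv ?_
    norm_num
  have h2 : HasDerivAt (fun δ : ℝ => (1 - δ * P) * Real.log (1 - δ * P)) (-P) 0 := by
    have hu : HasDerivAt (fun δ : ℝ => 1 - δ * P) (-P) 0 := (hasDerivAt_mul_const P).const_sub 1
    have := hu.fun_mul (hu.log (by norm_num))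
    refine this.congr_deriv ?_
    norm_num
  have hF : HasDerivAt (fun δ : ℝ =>
      P * ((1 - δ) * Real.log (1 - δ)) - (1 - δ * P) * Real.log (1 - δ * P)) 0 0 := by
    have := (h1.const_mul P).fun_sub h2
    refine this.congr_deriv ?_
    ring
  have hlo := hasDerivAt_iff_isLittleO.mp hF
  refine hlo.congr' (Filter.Eventually.of_forall fun δ => ?_)
    (Filter.Eventually.of_forall fun δ => ?_) <;> simp
lemma sum_sndM (p : α → β → ℝ) (hp : IsJointPMF p) : ∑ b, sndM p b = 1 := by
  rw [show ∑ b, sndM p b = ∑ a, ∑ b, p a b from Finset.sum_comm]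
  exact hp.2

lemma p_le_sndM (p : α → β → ℝ) (hp : IsJointPMF p) (x₀ : α) (b : β) :
    p x₀ b ≤ sndM p b :=
  Finset.single_le_sum (fun a _ => hp.1 a b) (Finset.mem_univ x₀)

lemma jYT_true (p : α → β → ℝ) (x₀ : α) (δ : ℝ) (b : β) :
    jYT p (pointChannel x₀ δ) b true = δ * p x₀ b := by
  simp only [jYT, pointChannel, if_true, mul_ite, mul_zero]
  simp [mul_comm]

lemma jYT_false (p : α → β → ℝ) (x₀ : α) (δ : ℝ) (b : β) :
    jYT p (pointChannel x₀ δ) b false = sndM p b - δ * p x₀ b := by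
  have h : ∀ a, p a b * (if a = x₀ then 1 - δ else 1)
      = p a b - (if a = x₀ then δ * p a b else 0) := by
    intro a; by_cases h : a = x₀ <;> simp [h] <;> ring
  simp only [jYT, pointChannel, Bool.false_eq_true, if_false]
  rw [Finset.sum_congr rfl fun a _ => h a, Finset.sum_sub_distrib]
  simp [sndM]

lemma jYT_fst (p : α → β → ℝ) (x₀ : α) (δ : ℝ) (b : β) :
    fstM (jYT p (pointChannel x₀ δ)) b = sndM p b := by
  rw [fstM, Fintype.sum_bool, jYT_true, jYT_false]
  ring

lemma jYT_snd_true (p : α → β → ℝ) (x₀ : α) (δ : ℝ) :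
    sndM (jYT p (pointChannel x₀ δ)) true = δ * fstM p x₀ := by
  rw [sndM]
  rw [Finset.sum_congr rfl fun b _ => jYT_true p x₀ δ b, ← Finset.mul_sum]
  rfl

lemma jYT_snd_false (p : α → β → ℝ) (hp : IsJointPMF p) (x₀ : α) (δ : ℝ) :
    sndM (jYT p (pointChannel x₀ δ)) false = 1 - δ * fstM p x₀ := by
  rw [sndM]
  rw [Finset.sum_congr rfl fun b _ => jYT_false p x₀ δ b, Finset.sum_sub_distrib,
    sum_sndM p hp, ← Finset.mul_sum]
  rfl

lemma miYT_formula (p : α → β → ℝ) (hp : IsJointPMF p) (x₀ : α)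
    {δ : ℝ} (hδ : δ ≠ 0) :
    miYT p (pointChannel x₀ δ) =
      δ * (∑ b, p x₀ b * Real.log (p x₀ b / (sndM p b * fstM p x₀)))
      + ∑ b, (sndM p b - δ * p x₀ b) *
          Real.log ((sndM p b - δ * p x₀ b) / (sndM p b * (1 - δ * fstM p x₀))) := by
  set P := fstM p x₀ with hPdef
  have hbterm : ∀ b ∈ (Finset.univ : Finset β),
      (∑ t : Bool, jYT p (pointChannel x₀ δ) b t *
        Real.log (jYT p (pointChannel x₀ δ) b t /
          (fstM (jYT p (pointChannel x₀ δ)) b * sndM (jYT p (pointChannel x₀ δ)) t)))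
      = δ * (p x₀ b * Real.log (p x₀ b / (sndM p b * P)))
        + (sndM p b - δ * p x₀ b) *
            Real.log ((sndM p b - δ * p x₀ b) / (sndM p b * (1 - δ * P))) := by
    intro b _
    rw [Fintype.sum_bool, jYT_true, jYT_false, jYT_fst, jYT_snd_true,
      jYT_snd_false p hp, ← hPdef]
    congr 1
    rw [show sndM p b * (δ * P) = (sndM p b * P) * δ by ring,
      show δ * p x₀ b = p x₀ b * δ by ring,
      mul_div_mul_right _ _ hδ]
    ring
  rw [miYT, mi, Finset.sum_congr rfl hbterm, Finset.sum_add_distrib, ← Finset.mul_sum]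

lemma G_littleO (p : α → β → ℝ) (hp : IsJointPMF p) (x₀ : α) :
    (fun δ : ℝ => ∑ b, (sndM p b - δ * p x₀ b) *
        Real.log ((sndM p b - δ * p x₀ b) / (sndM p b * (1 - δ * fstM p x₀))))
      =o[nhds (0:ℝ)] fun δ => δ := by
  set P := fstM p x₀ with hPdef
  have hper : ∀ b ∈ (Finset.univ : Finset β), HasDerivAt
      (fun δ : ℝ => (sndM p b - δ * p x₀ b) *
        Real.log ((sndM p b - δ * p x₀ b) / (sndM p b * (1 - δ * P))))
      (P * sndM p b - p x₀ b) 0 := by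
    intro b _
    rcases eq_or_ne (sndM p b) 0 with h0 | hne
    · have hc : p x₀ b = 0 := le_antisymm (h0 ▸ p_le_sndM p hp x₀ b) (hp.1 x₀ b)
      simp only [h0, hc]
      have hz : (fun δ : ℝ => ((0:ℝ) - δ * 0) *
          Real.log ((0 - δ * 0) / (0 * (1 - δ * P)))) = fun _ => (0:ℝ) := by
        funext δ; simp
      rw [hz, show P * 0 - (0:ℝ) = 0 by ring]
      exact hasDerivAt_const 0 0
    · exact hasDerivAt_term (sndM p b) (p x₀ b) P hne
  have hG := HasDerivAt.fun_sum hper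
  rw [Finset.sum_sub_distrib, ← Finset.mul_sum, sum_sndM p hp,
    show ∑ b, p x₀ b = P from rfl, mul_one, sub_self] at hG
  have hlo := hasDerivAt_iff_isLittleO.mp hG
  have hG0 : ∀ b ∈ (Finset.univ : Finset β), (sndM p b - (0:ℝ) * p x₀ b) *
      Real.log ((sndM p b - (0:ℝ) * p x₀ b) / (sndM p b * (1 - (0:ℝ) * P))) = 0 := by
    intro b _
    rcases eq_or_ne (sndM p b) 0 with h0 | hne
    · simp [h0]
    · simp [div_self hne]
  refine hlo.congr' (Filter.Eventually.of_forall fun δ => ?_)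
    (Filter.Eventually.of_forall fun δ => ?_)
  · rw [Finset.sum_eq_zero hG0]; simp
  · simp

end Aux

/-- for the binary `T` with `P(T=1|X=x) = δ·1{x=x₀}`,
`I(X;T) = h_b(δ P_X(x₀)) − P_X(x₀) h_b(δ)`; and as `δ → 0⁺`,
`I(X;T) = −δ P_X(x₀) log P_X(x₀) + o(δ)` and
`I(Y;T) = δ P_X(x₀) D_KL(P_{Y|X=x₀}‖P_Y) + o(δ)`. -/
theorem pointChannel_mi {α β : Type*} [Fintype α] [Fintype β] [DecidableEq α]
    (p : α → β → ℝ) (hp : IsJointPMF p) (x₀ : α) (hx₀ : 0 < fstM p x₀) :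
    (∀ δ ∈ Set.Ioc (0:ℝ) 1,
      miXT p (pointChannel x₀ δ) = hB (δ * fstM p x₀) - fstM p x₀ * hB δ) ∧
    (fun δ : ℝ => miXT p (pointChannel x₀ δ) - δ * fstM p x₀ * (-Real.log (fstM p x₀)))
      =o[nhdsWithin 0 (Set.Ioi 0)] (fun δ : ℝ => δ) ∧
    (fun δ : ℝ => miYT p (pointChannel x₀ δ) -
        δ * fstM p x₀ *
          (∑ y, (p x₀ y / fstM p x₀) * Real.log ((p x₀ y / fstM p x₀) / sndM p y)))
      =o[nhdsWithin 0 (Set.Ioi 0)] (fun δ : ℝ => δ) := by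
  set P := fstM p x₀ with hPdef
  have hP0 : (0:ℝ) < P := hx₀
  refine ⟨fun δ hδ => miXT_formula p hp x₀ hx₀ hδ.1 hδ.2, ?_, ?_⟩
  · refine ((F_littleO P).mono nhdsWithin_le_nhds).congr' ?_ Filter.EventuallyEq.rfl
    filter_upwards [Ioc_mem_nhdsGT_of_mem (Set.left_mem_Ico.mpr one_pos)] with δ hδ
    rw [miXT_formula p hp x₀ hx₀ hδ.1 hδ.2, ← hPdef, hB, hB,
      Real.log_mul hδ.1.ne' hP0.ne']
    ring
  · refine ((G_littleO p hp x₀).mono nhdsWithin_le_nhds).congr' ?_ Filter.EventuallyEq.rfl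
    filter_upwards [self_mem_nhdsWithin] with δ (hδ : δ ∈ Set.Ioi 0)
    rw [miYT_formula p hp x₀ (ne_of_gt hδ), ← hPdef]
    have hterm : ∀ y ∈ (Finset.univ : Finset β),
        P * ((p x₀ y / P) * Real.log ((p x₀ y / P) / sndM p y))
          = p x₀ y * Real.log (p x₀ y / (sndM p y * P)) := by
      intro y _
      rw [div_div, mul_comm P (sndM p y), ← mul_assoc, mul_comm P (p x₀ y / P),
        div_mul_cancel₀ _ hP0.ne']
    rw [show δ * P * (∑ y, (p x₀ y / P) * Real.log ((p x₀ y / P) / sndM p y))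
        = δ * ∑ y, P * ((p x₀ y / P) * Real.log ((p x₀ y / P) / sndM p y)) by
        rw [← Finset.mul_sum]; ring,
      Finset.sum_congr rfl hterm]
    ring
end BN
end
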